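/- arXiv:2603.03868 — 4 statements merged into one kernel-verified Lean document; each statement's English description precedes it below -/
import Mathlib

section
/- For every real y and every complex ζ with Re ζ > 0, the Laplace transform of x ↦ J_{0,1}(x,y) equals 1 - exp(-y/ζ); that is, ∫_0^∞ e^{-xζ} J_{0,1}(x,y) dx = 1 - e^{-y/ζ}. -/
/-!
Write `J01 x y = ∑ bₙ xⁿ / n!` with `bₙ = (-1)ⁿ yⁿ⁺¹ / (n+1)!`. Since
`∫₀^∞ xⁿ e^{-xζ} dx = n! / ζⁿ⁺¹` (integration by parts) and `∑ |bₙ| / (Re ζ)ⁿ⁺¹ < ∞`, the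
Laplace transform may be taken termwise, giving
`∑ bₙ / ζⁿ⁺¹ = -∑ (-y/ζ)ⁿ⁺¹ / (n+1)! = 1 - e^{-y/ζ}`.
-/

noncomputable def J01 (x y : ℝ) : ℝ :=
  ∑' j : ℕ, (-1 : ℝ) ^ j * x ^ j * y ^ (j + 1) /
    ((Nat.factorial j : ℝ) * (Nat.factorial (j + 1) : ℝ))

open MeasureTheory Set Filter Topology Complex
open scoped Nat

section LaplacePow

variable {ζ : ℂ}

lemma norm_pow_mul_cexp_neg_mul {x : ℝ} (hx : 0 ≤ x) (n : ℕ) :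
    ‖(x : ℂ) ^ n * cexp (-x * ζ)‖ = x ^ n * Real.exp (-ζ.re * x) := by
  rw [norm_mul, norm_pow, norm_real, norm_exp]
  simp [abs_of_nonneg hx, mul_comm]

lemma integrableOn_pow_mul_cexp_neg_mul (hζ : 0 < ζ.re) (n : ℕ) :
    IntegrableOn (fun x : ℝ => (x : ℂ) ^ n * cexp (-x * ζ)) (Ioi 0) := by
  have hreal : IntegrableOn (fun x : ℝ => x ^ (n : ℝ) * Real.exp (-ζ.re * x ^ (1 : ℝ))) (Ioi 0) :=
    integrableOn_rpow_mul_exp_neg_mul_rpow (by linarith [n.cast_nonneg (α := ℝ)]) one_pos hζ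
  refine hreal.mono' (by fun_prop) ?_
  filter_upwards [ae_restrict_mem measurableSet_Ioi] with x hx
  rw [norm_pow_mul_cexp_neg_mul hx.le, Real.rpow_natCast, Real.rpow_one]

lemma tendsto_pow_mul_cexp_neg_mul_atTop (hζ : 0 < ζ.re) (n : ℕ) :
    Tendsto (fun x : ℝ => (x : ℂ) ^ n * cexp (-x * ζ)) atTop (𝓝 0) := by
  rw [tendsto_zero_iff_norm_tendsto_zero]
  refine (tendsto_rpow_mul_exp_neg_mul_atTop_nhds_zero n ζ.re hζ).congr' ?_
  filter_upwards [eventually_ge_atTop 0] with x hx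
  rw [norm_pow_mul_cexp_neg_mul hx, Real.rpow_natCast]

lemma integral_cexp_neg_mul (hζ : 0 < ζ.re) :
    ∫ x in Ioi (0 : ℝ), cexp (-x * ζ) = 1 / ζ := by
  have h := integral_exp_mul_complex_Ioi (a := -ζ) (by simpa using hζ) 0
  simpa [mul_comm] using h

lemma integral_pow_succ_mul_cexp_neg_mul (hζ : 0 < ζ.re) (n : ℕ) :
    ζ * ∫ x in Ioi (0 : ℝ), (x : ℂ) ^ (n + 1) * cexp (-x * ζ)
      = (n + 1) * ∫ x in Ioi (0 : ℝ), (x : ℂ) ^ n * cexp (-x * ζ) := by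
  have hderiv (x : ℝ) : HasDerivAt (fun x : ℝ => (x : ℂ) ^ (n + 1) * cexp (-x * ζ))
      ((n + 1) * ((x : ℂ) ^ n * cexp (-x * ζ)) - ζ * ((x : ℂ) ^ (n + 1) * cexp (-x * ζ))) x := by
    have hpow : HasDerivAt (fun y : ℝ => (y : ℂ) ^ (n + 1)) ((n + 1) * (x : ℂ) ^ n) x := by
      simpa using (hasDerivAt_pow (n + 1) (x : ℂ)).comp_ofReal
    have hexp : HasDerivAt (fun y : ℝ => cexp (-y * ζ)) (cexp (-x * ζ) * -ζ) x := by
      simpa using ((hasDerivAt_id (x : ℂ)).neg.mul_const ζ).cexp.comp_ofReal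
    exact (hpow.mul hexp).congr_deriv (by ring)
  have hint := integrableOn_pow_mul_cexp_neg_mul hζ
  have hftc := integral_Ioi_of_hasDerivAt_of_tendsto' (fun x _ => hderiv x)
    (((hint n).const_mul _).sub ((hint (n + 1)).const_mul ζ))
    (tendsto_pow_mul_cexp_neg_mul_atTop hζ (n + 1))
  rw [integral_sub ((hint n).const_mul _) ((hint (n + 1)).const_mul ζ), integral_const_mul,
    integral_const_mul] at hftc
  rw [ofReal_zero, zero_pow n.succ_ne_zero, zero_mul, sub_zero] at hftc
  linear_combination -hftc

lemma integral_pow_mul_cexp_neg_mul (hζ : 0 < ζ.re) (n : ℕ) :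
    ∫ x in Ioi (0 : ℝ), (x : ℂ) ^ n * cexp (-x * ζ) = n ! / ζ ^ (n + 1) := by
  have hζ0 : ζ ≠ 0 := by rintro rfl; simp at hζ
  induction n with
  | zero => simpa using integral_cexp_neg_mul hζ
  | succ n ih =>
    have h := integral_pow_succ_mul_cexp_neg_mul hζ n
    rw [ih] at h
    rw [eq_div_iff (pow_ne_zero _ hζ0), Nat.factorial_succ]
    push_cast
    field_simp at h ⊢
    linear_combination h

lemma integral_pow_mul_exp_neg_mul {σ : ℝ} (hσ : 0 < σ) (n : ℕ) :
    ∫ x in Ioi (0 : ℝ), x ^ n * Real.exp (-σ * x) = n ! / σ ^ (n + 1) := by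
  have h := integral_pow_mul_cexp_neg_mul (ζ := σ) (by simpa using hσ) n
  simp_rw [neg_mul_comm, mul_comm _ (-(σ : ℂ))] at h
  exact_mod_cast h

theorem integral_cexp_neg_mul_mul_tsum (hζ : 0 < ζ.re) {b : ℕ → ℂ}
    (hb : Summable fun n => ‖b n‖ / ζ.re ^ (n + 1)) :
    ∫ x in Ioi (0 : ℝ), cexp (-x * ζ) * ∑' n, b n * (x : ℂ) ^ n / n !
      = ∑' n, b n / ζ ^ (n + 1) := by
  set F : ℕ → ℝ → ℂ := fun n x => b n / n ! * ((x : ℂ) ^ n * cexp (-x * ζ))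
  have hF_int (n : ℕ) : IntegrableOn (F n) (Ioi 0) :=
    (integrableOn_pow_mul_cexp_neg_mul hζ n).const_mul _
  have hF_norm (n : ℕ) : ∫ x in Ioi (0 : ℝ), ‖F n x‖ = ‖b n‖ / ζ.re ^ (n + 1) := by
    rw [setIntegral_congr_fun measurableSet_Ioi fun x hx => by
        rw [norm_mul, norm_pow_mul_cexp_neg_mul hx.le],
      integral_const_mul, integral_pow_mul_exp_neg_mul hζ, norm_div, norm_natCast]
    field_simp
  have hF_integral (n : ℕ) : ∫ x in Ioi (0 : ℝ), F n x = b n / ζ ^ (n + 1) := by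
    have : (n ! : ℂ) ≠ 0 := mod_cast n.factorial_ne_zero
    rw [integral_const_mul, integral_pow_mul_cexp_neg_mul hζ]
    field_simp
  calc ∫ x in Ioi (0 : ℝ), cexp (-x * ζ) * ∑' n, b n * (x : ℂ) ^ n / n !
      = ∫ x in Ioi (0 : ℝ), ∑' n, F n x := by
        refine integral_congr_ae (ae_of_all _ fun x => ?_)
        simp only [F, ← tsum_mul_left]
        exact tsum_congr fun n => by ring
    _ = ∑' n, b n / ζ ^ (n + 1) := by
        rw [← integral_tsum_of_summable_integral_norm hF_int (by simpa only [hF_norm] using hb)]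
        exact tsum_congr hF_integral

end LaplacePow

lemma tsum_pow_succ_div_factorial_succ (w : ℂ) :
    ∑' n : ℕ, w ^ (n + 1) / (n + 1)! = cexp w - 1 := by
  have h := (hasSum_nat_add_iff' 1).mpr (NormedSpace.expSeries_div_hasSum_exp w)
  rw [← exp_eq_exp_ℂ] at h
  simpa using h.tsum_eq

lemma ofReal_J01 (x y : ℝ) :
    (J01 x y : ℂ) = ∑' n, (-1) ^ n * (y : ℂ) ^ (n + 1) / (n + 1)! * (x : ℂ) ^ n / n ! := by
  rw [J01, ofReal_tsum]
  refine tsum_congr fun n => ?_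
  push_cast
  ring

theorem laplace_J01 (y : ℝ) (ζ : ℂ) (hζ : 0 < ζ.re) :
    ∫ x in Set.Ioi (0 : ℝ), Complex.exp (-(x : ℂ) * ζ) * (J01 x y : ℂ)
      = 1 - Complex.exp (-(y : ℂ) / ζ) := by
  have hζ0 : ζ ≠ 0 := by rintro rfl; simp at hζ
  have hsummable : Summable fun n : ℕ =>
      ‖(-1) ^ n * (y : ℂ) ^ (n + 1) / (n + 1)!‖ / ζ.re ^ (n + 1) := by
    refine ((summable_nat_add_iff 1).mpr (Real.summable_pow_div_factorial (|y| / ζ.re))).congr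
      fun n => ?_
    simp only [div_pow, norm_div, norm_mul, norm_pow, norm_neg, norm_one, one_pow, norm_real,
      Real.norm_eq_abs, one_mul, RCLike.norm_natCast]
    ring
  have hterm (n : ℕ) : (-1) ^ n * (y : ℂ) ^ (n + 1) / (n + 1)! / ζ ^ (n + 1)
      = -((-y / ζ) ^ (n + 1) / (n + 1)!) := by
    rw [div_pow, neg_pow (y : ℂ), pow_succ (-1 : ℂ)]
    field_simp
  simp_rw [ofReal_J01]
  rw [integral_cexp_neg_mul_mul_tsum hζ hsummable, tsum_congr hterm, tsum_neg,
    tsum_pow_succ_div_factorial_succ]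
  ring
end

section
/- Let ψ : ℝ_{>0} → ℝ be C³ with ψ'' > 0 and ψ''' < 0 on ℝ_{>0}, extending continuously to ℝ_{≥0}. Suppose t₀ ∈ ℝ_{>0} satisfies ψ'(t₀) = 0, and let 0 < t₀ < t₁ < ∞. Then ∫_0^∞ exp(-ψ(t)) dt ≤ e^{-ψ(t₀)} √(2π/ψ''(t₁)) + e^{-ψ(t₁)}/ψ'(t₁). -/
/-!
Split the integral at `t₁`. Since `ψ''` decreases, `ψ'' ≥ ψ''(t₁)` on `(0, t₁]`, so there `ψ` lies
above the parabola `ψ(t₀) + ψ''(t₁) (t - t₀)² / 2` through its critical point and `e^{-ψ}` is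
dominated by a Gaussian. On `(t₁, ∞)` the convex function `ψ` lies above its tangent at `t₁`,
whose slope `ψ'(t₁)` is positive, so `e^{-ψ}` is dominated by an exponential decay.
-/

open Real MeasureTheory Set

theorem ConvexOn.add_mul_sub_le_of_hasDerivAt {S : Set ℝ} {f : ℝ → ℝ} {x y f' : ℝ}
    (hfc : ConvexOn ℝ S f) (hx : x ∈ S) (hy : y ∈ S) (hf : HasDerivAt f f' x) :
    f x + f' * (y - x) ≤ f y := by
  rcases lt_trichotomy x y with hxy | rfl | hxy
  · have := hfc.le_slope_of_hasDerivAt hx hy hxy hf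
    rw [slope_def_field, le_div_iff₀ (sub_pos.2 hxy)] at this
    linarith
  · simp
  · have := hfc.slope_le_of_hasDerivAt hy hx hxy hf
    rw [slope_def_field, div_le_iff₀ (sub_pos.2 hxy)] at this
    linarith

theorem Convex.add_mul_sub_add_mul_sq_le {D : Set ℝ} (hD : Convex ℝ D) {f f' f'' : ℝ → ℝ}
    {c : ℝ} (hf : ∀ x ∈ D, HasDerivAt f (f' x) x) (hf' : ∀ x ∈ D, HasDerivAt f' (f'' x) x)
    (hc : ∀ x ∈ D, c ≤ f'' x) {x y : ℝ} (hx : x ∈ D) (hy : y ∈ D) :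
    f x + f' x * (y - x) + c / 2 * (y - x) ^ 2 ≤ f y := by
  -- `f - c t² / 2` is convex, so it lies above its tangent at `x`.
  have hg : ∀ t ∈ D, HasDerivAt (fun t ↦ f t - c / 2 * t ^ 2) (f' t - c * t) t := fun t ht ↦
    ((hf t ht).sub ((hasDerivAt_pow 2 t).const_mul (c / 2))).congr_deriv (by ring)
  have hg' : ∀ t ∈ D, HasDerivAt (fun t ↦ f' t - c * t) (f'' t - c) t := fun t ht ↦
    ((hf' t ht).sub ((hasDerivAt_id' t).const_mul c)).congr_deriv (by ring)
  have hconv : ConvexOn ℝ D (fun t ↦ f t - c / 2 * t ^ 2) :=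
    convexOn_of_hasDerivWithinAt2_nonneg hD (fun t ht ↦ (hg t ht).continuousAt.continuousWithinAt)
      (fun t ht ↦ (hg t (interior_subset ht)).hasDerivWithinAt)
      (fun t ht ↦ (hg' t (interior_subset ht)).hasDerivWithinAt)
      (fun t ht ↦ sub_nonneg.2 (hc t (interior_subset ht)))
  linear_combination hconv.add_mul_sub_le_of_hasDerivAt hx hy (hg x hx)

theorem setIntegral_union_le_of_nonneg {α : Type*} [MeasurableSpace α] {μ : Measure α}
    {f : α → ℝ} {s t : Set α} (hst : Disjoint s t) (ht : MeasurableSet t)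
    (hfs : 0 ≤ᵐ[μ.restrict s] f) (hft : 0 ≤ᵐ[μ.restrict t] f) :
    ∫ x in s ∪ t, f x ∂μ ≤ ∫ x in s, f x ∂μ + ∫ x in t, f x ∂μ := by
  by_cases hf : IntegrableOn f (s ∪ t) μ
  · exact (setIntegral_union hst ht (hf.mono_set subset_union_left)
      (hf.mono_set subset_union_right)).le
  · rw [integral_undef hf]
    exact add_nonneg (integral_nonneg_of_ae hfs) (integral_nonneg_of_ae hft)

theorem setIntegral_exp_neg_le_of_quadratic_le {φ : ℝ → ℝ} {s : Set ℝ} {m c x₀ : ℝ}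
    (hs : MeasurableSet s) (hc : 0 < c) (hφ : ∀ x ∈ s, m + c / 2 * (x - x₀) ^ 2 ≤ φ x) :
    ∫ x in s, exp (-φ x) ≤ exp (-m) * √(2 * π / c) := by
  have hG : Integrable fun x ↦ exp (-m) * exp (-(c / 2) * (x - x₀) ^ 2) :=
    ((integrable_exp_neg_mul_sq (half_pos hc)).comp_sub_right x₀).const_mul _
  calc ∫ x in s, exp (-φ x)
      ≤ ∫ x in s, exp (-m) * exp (-(c / 2) * (x - x₀) ^ 2) :=
        integral_mono_of_nonneg (ae_of_all _ fun _ ↦ (exp_pos _).le) hG.integrableOn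
          (ae_restrict_of_forall_mem hs fun x hx ↦ by
            dsimp only
            rw [← exp_add]
            exact exp_le_exp.2 (by linarith [hφ x hx]))
    _ ≤ ∫ x, exp (-m) * exp (-(c / 2) * (x - x₀) ^ 2) :=
        setIntegral_le_integral hG (ae_of_all _ fun _ ↦ by positivity)
    _ = exp (-m) * √(2 * π / c) := by
        rw [integral_const_mul, integral_sub_right_eq_self (fun x ↦ exp (-(c / 2) * x ^ 2)),
          integral_gaussian]
        congr 2
        field_simp

theorem setIntegral_Ioi_exp_neg_le_of_linear_le {φ : ℝ → ℝ} {m a b : ℝ} (ha : 0 < a)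
    (hφ : ∀ x ∈ Ioi b, m + a * (x - b) ≤ φ x) :
    ∫ x in Ioi b, exp (-φ x) ≤ exp (-m) / a := by
  calc ∫ x in Ioi b, exp (-φ x)
      ≤ ∫ x in Ioi b, exp (a * b - m) * exp (-a * x) :=
        integral_mono_of_nonneg (ae_of_all _ fun _ ↦ (exp_pos _).le)
          ((exp_neg_integrableOn_Ioi b ha).const_mul _)
          (ae_restrict_of_forall_mem measurableSet_Ioi fun x hx ↦ by
            dsimp only
            rw [← exp_add]
            exact exp_le_exp.2 (by linarith [hφ x hx]))
    _ = exp (-m) / a := by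
        rw [integral_const_mul, integral_exp_mul_Ioi (neg_lt_zero.2 ha), neg_div_neg_eq,
          mul_div_assoc', ← exp_add]
        ring_nf

theorem integral_exp_neg_psi_bound_general
    (ψ ψ' ψ'' ψ''' : ℝ → ℝ)
    (hd1 : ∀ t : ℝ, 0 < t → HasDerivAt ψ (ψ' t) t)
    (hd2 : ∀ t : ℝ, 0 < t → HasDerivAt ψ' (ψ'' t) t)
    (hd3 : ∀ t : ℝ, 0 < t → HasDerivAt ψ'' (ψ''' t) t)
    (hpos : ∀ t : ℝ, 0 < t → 0 < ψ'' t)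
    (hneg : ∀ t : ℝ, 0 < t → ψ''' t < 0)
    (t₀ t₁ : ℝ) (ht₀ : 0 < t₀) (hcrit : ψ' t₀ = 0) (ht₀₁ : t₀ < t₁) :
    ∫ t in Set.Ioi (0 : ℝ), Real.exp (-ψ t)
      ≤ Real.exp (-ψ t₀) * Real.sqrt (2 * π / ψ'' t₁)
        + Real.exp (-ψ t₁) / ψ' t₁ := by
  have ht₁ : 0 < t₁ := ht₀.trans ht₀₁
  have hψ''_anti : AntitoneOn ψ'' (Ioi 0) :=
    antitoneOn_of_hasDerivWithinAt_nonpos (convex_Ioi 0)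
      (fun t ht ↦ (hd3 t ht).continuousAt.continuousWithinAt)
      (fun t ht ↦ (hd3 t (interior_subset ht)).hasDerivWithinAt)
      (fun t ht ↦ (hneg t (interior_subset ht)).le)
  have hψ'_pos : 0 < ψ' t₁ := by
    have hψ'_mono : StrictMonoOn ψ' (Ioi 0) :=
      strictMonoOn_of_hasDerivWithinAt_pos (convex_Ioi 0)
        (fun t ht ↦ (hd2 t ht).continuousAt.continuousWithinAt)
        (fun t ht ↦ (hd2 t (interior_subset ht)).hasDerivWithinAt)
        (fun t ht ↦ hpos t (interior_subset ht))
    simpa [hcrit] using hψ'_mono ht₀ ht₁ ht₀₁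
  have hquad : ∀ t ∈ Ioc 0 t₁, ψ t₀ + ψ'' t₁ / 2 * (t - t₀) ^ 2 ≤ ψ t := fun t ht ↦ by
    simpa [hcrit] using (convex_Ioc 0 t₁).add_mul_sub_add_mul_sq_le (fun s hs ↦ hd1 s hs.1)
      (fun s hs ↦ hd2 s hs.1) (fun s hs ↦ hψ''_anti hs.1 ht₁ hs.2) ⟨ht₀, ht₀₁.le⟩ ht
  have hlin : ∀ t ∈ Ioi t₁, ψ t₁ + ψ' t₁ * (t - t₁) ≤ ψ t := fun t ht ↦ by
    simpa using (convex_Ioi 0).add_mul_sub_add_mul_sq_le hd1 hd2 (c := 0)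
      (fun s hs ↦ (hpos s hs).le) ht₁ (ht₁.trans ht)
  calc ∫ t in Ioi 0, exp (-ψ t) = ∫ t in Ioc 0 t₁ ∪ Ioi t₁, exp (-ψ t) := by
        rw [Ioc_union_Ioi_eq_Ioi ht₁.le]
    _ ≤ (∫ t in Ioc 0 t₁, exp (-ψ t)) + ∫ t in Ioi t₁, exp (-ψ t) :=
        setIntegral_union_le_of_nonneg (Ioc_disjoint_Ioi le_rfl) measurableSet_Ioi
          (ae_of_all _ fun _ ↦ (exp_pos _).le) (ae_of_all _ fun _ ↦ (exp_pos _).le)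
    _ ≤ _ := add_le_add
        (setIntegral_exp_neg_le_of_quadratic_le measurableSet_Ioc (hpos t₁ ht₁) hquad)
        (setIntegral_Ioi_exp_neg_le_of_linear_le hψ'_pos hlin)

theorem integral_exp_neg_psi_bound
    (ψ ψ' ψ'' ψ''' : ℝ → ℝ)
    (hcont : ContinuousOn ψ (Set.Ici 0))
    (hd1 : ∀ t : ℝ, 0 < t → HasDerivAt ψ (ψ' t) t)
    (hd2 : ∀ t : ℝ, 0 < t → HasDerivAt ψ' (ψ'' t) t)
    (hd3 : ∀ t : ℝ, 0 < t → HasDerivAt ψ'' (ψ''' t) t)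
    (hpos : ∀ t : ℝ, 0 < t → 0 < ψ'' t)
    (hneg : ∀ t : ℝ, 0 < t → ψ''' t < 0)
    (t₀ t₁ : ℝ) (ht₀ : 0 < t₀) (hcrit : ψ' t₀ = 0) (ht₀₁ : t₀ < t₁) :
    ∫ t in Set.Ioi (0 : ℝ), Real.exp (-ψ t)
      ≤ Real.exp (-ψ t₀) * Real.sqrt (2 * π / ψ'' t₁)
        + Real.exp (-ψ t₁) / ψ' t₁ :=
  integral_exp_neg_psi_bound_general ψ ψ' ψ'' ψ''' hd1 hd2 hd3 hpos hneg t₀ t₁ ht₀ hcrit ht₀₁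
end

section
/- For 0 < q < 1 and θ, σ > 0, ∫_0^∞ exp(θ t^q - σ t) dt ≤ (1/σ)(A σ^{-q/(2(1-q))} + B) exp(D σ^{-q/(1-q)}), where A = 2^{1-q/2} (qθ)^{1/(2(1-q))} √(2π/(1-q)), B = 4/(1-q), and D = (1-q)θ(qθ)^{q/(1-q)}. -/
/-!
The exponent `φ t = θ * t ^ q - σ * t` is concave on `(0, ∞)` and peaks at
`T = (q θ / σ) ^ (1 / (1 - q))`, where `φ T = D σ ^ (-q / (1 - q))`.
On `(0, 2T]` we have `φ'' ≤ φ'' (2T) = -c`, so `φ` lies below the parabola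
`φ T - c (t - T) ^ 2 / 2`, whose Gaussian integral is `e ^ (φ T) A σ ^ (-q / (2 (1 - q))) / σ`.
Beyond `2T`, `φ` lies below its tangent at `2T`, of slope `σ (2 ^ (q - 1) - 1) ≤ -(1 - q) σ / 2`
by Bernoulli's inequality; this exponential tail contributes at most
`2 e ^ (φ T) / ((1 - q) σ) ≤ e ^ (φ T) B / σ`.
-/

open Real MeasureTheory Set

theorem ConcaveOn.le_add_mul_sub_of_hasDerivAt {S : Set ℝ} {f : ℝ → ℝ} {x y f' : ℝ}
    (hf : ConcaveOn ℝ S f) (hx : x ∈ S) (hy : y ∈ S) (hf' : HasDerivAt f f' x) :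
    f y ≤ f x + f' * (y - x) := by
  rcases lt_trichotomy y x with hyx | rfl | hxy
  · have h := hf.le_slope_of_hasDerivAt hy hx hyx hf'
    rw [slope_def_field, le_div_iff₀ (sub_pos.2 hyx)] at h
    linarith
  · simp
  · have h := hf.slope_le_of_hasDerivAt hx hy hxy hf'
    rw [slope_def_field, div_le_iff₀ (sub_pos.2 hxy)] at h
    linarith

theorem le_add_mul_sub_sub_sq_of_hasDerivAt2 {D : Set ℝ} (hD : Convex ℝ D) {f f' f'' : ℝ → ℝ}
    {c x y : ℝ} (hf : ContinuousOn f D) (hf' : ∀ t ∈ interior D, HasDerivAt f (f' t) t)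
    (hf'' : ∀ t ∈ interior D, HasDerivAt f' (f'' t) t) (hc : ∀ t ∈ interior D, f'' t ≤ -c)
    (hx : x ∈ interior D) (hy : y ∈ D) :
    f y ≤ f x + f' x * (y - x) - c / 2 * (y - x) ^ 2 := by
  have hg' (t : ℝ) (ht : t ∈ interior D) :
      HasDerivAt (fun s => f s + c / 2 * (s - x) ^ 2) (f' t + c * (t - x)) t := by
    refine ((hf' t ht).fun_add
      (((hasDerivAt_id' t).sub_const x).fun_pow 2 |>.const_mul (c / 2))).congr_deriv ?_
    push_cast
    ring
  have hg'' (t : ℝ) (ht : t ∈ interior D) :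
      HasDerivAt (fun s => f' s + c * (s - x)) (f'' t + c) t := by
    simpa using (hf'' t ht).fun_add (((hasDerivAt_id t).sub_const x).const_mul c)
  have hconcave : ConcaveOn ℝ D (fun s => f s + c / 2 * (s - x) ^ 2) :=
    concaveOn_of_hasDerivWithinAt2_nonpos hD (hf.add (by fun_prop))
      (fun t ht => (hg' t ht).hasDerivWithinAt) (fun t ht => (hg'' t ht).hasDerivWithinAt)
      (fun t ht => by linarith [hc t ht])
  have := hconcave.le_add_mul_sub_of_hasDerivAt (interior_subset hx) hy (hg' x hx)
  simp only [sub_self] at this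
  linarith

section Profile

variable {q θ σ T t : ℝ}

theorem hasDerivAt_mul_rpow_sub_mul (ht : t ≠ 0) :
    HasDerivAt (fun s => θ * s ^ q - σ * s) (q * θ * t ^ (q - 1) - σ) t := by
  refine (((hasDerivAt_rpow_const (Or.inl ht)).const_mul θ).fun_sub
    ((hasDerivAt_id' t).const_mul σ)).congr_deriv ?_
  ring

theorem hasDerivAt_mul_rpow_sub_const (ht : t ≠ 0) :
    HasDerivAt (fun s => q * θ * s ^ (q - 1) - σ) (q * (q - 1) * θ * t ^ (q - 2)) t := by
  refine (((hasDerivAt_rpow_const (Or.inl ht)).const_mul (q * θ)).sub_const σ).congr_deriv ?_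
  rw [show q - 1 - 1 = q - 2 by ring]
  ring

theorem mul_rpow_sub_mul_le_sub_sq_of_deriv2_le {D : Set ℝ} (hD : Convex ℝ D)
    (hD0 : D ⊆ Ioi 0) {c x : ℝ} (hc : ∀ s ∈ interior D, q * (q - 1) * θ * s ^ (q - 2) ≤ -c)
    (hx : x ∈ interior D) (ht : t ∈ D) :
    θ * t ^ q - σ * t ≤ θ * x ^ q - σ * x + (q * θ * x ^ (q - 1) - σ) * (t - x)
      - c / 2 * (t - x) ^ 2 :=
  le_add_mul_sub_sub_sq_of_hasDerivAt2 hD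
    (fun _ hs => (hasDerivAt_mul_rpow_sub_mul (hD0 hs).ne').continuousAt.continuousWithinAt)
    (fun _ hs => hasDerivAt_mul_rpow_sub_mul (hD0 (interior_subset hs)).ne')
    (fun _ hs => hasDerivAt_mul_rpow_sub_const (hD0 (interior_subset hs)).ne') hc hx ht

variable (hq0 : 0 ≤ q) (hq1 : q ≤ 1) (hθ : 0 ≤ θ) (hT0 : 0 < T) (hT : q * θ * T ^ (q - 1) = σ)
include hq0 hq1 hθ hT0 hT

theorem mul_rpow_sub_mul_le_sub_sq (ht : t ∈ Ioc 0 (2 * T)) :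
    θ * t ^ q - σ * t
      ≤ θ * T ^ q - σ * T - q * (1 - q) * θ * (2 * T) ^ (q - 2) / 2 * (t - T) ^ 2 := by
  have hc (s : ℝ) (hs : s ∈ interior (Ioc 0 (2 * T))) :
      q * (q - 1) * θ * s ^ (q - 2) ≤ -(q * (1 - q) * θ * (2 * T) ^ (q - 2)) := by
    rw [interior_Ioc] at hs
    have := rpow_le_rpow_of_nonpos hs.1 hs.2.le (by linarith : q - 2 ≤ 0)
    have : 0 ≤ q * (1 - q) * θ := by have := sub_nonneg.2 hq1; positivity
    nlinarith
  have hT' : T ∈ interior (Ioc 0 (2 * T)) := by rw [interior_Ioc]; constructor <;> linarith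
  simpa [hT] using
    mul_rpow_sub_mul_le_sub_sq_of_deriv2_le (σ := σ) (convex_Ioc _ _) Ioc_subset_Ioi_self hc hT' ht

theorem mul_rpow_sub_mul_le_sub_mul (ht : 2 * T ≤ t) :
    θ * t ^ q - σ * t ≤ θ * T ^ q - σ * T - (1 - q) * σ / 2 * (t - 2 * T) := by
  have hconc (s : ℝ) (hs : s ∈ interior (Ioi (0 : ℝ))) :
      q * (q - 1) * θ * s ^ (q - 2) ≤ -0 := by
    rw [interior_Ioi] at hs
    have : 0 ≤ q * (1 - q) * θ * s ^ (q - 2) := by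
      have := sub_nonneg.2 hq1; have := hs.out.le; positivity
    linarith
  have h2T : (0 : ℝ) < 2 * T := by positivity
  have hpeak := mul_rpow_sub_mul_le_sub_sq_of_deriv2_le (σ := σ) (convex_Ioi 0) subset_rfl hconc
    (x := T) (by rwa [interior_Ioi]) (mem_Ioi.2 h2T)
  have htangent := mul_rpow_sub_mul_le_sub_sq_of_deriv2_le (σ := σ) (convex_Ioi 0) subset_rfl hconc
    (x := 2 * T) (by rwa [interior_Ioi]) (mem_Ioi.2 (h2T.trans_le ht))
  have hslope : q * θ * (2 * T) ^ (q - 1) - σ ≤ -((1 - q) * σ / 2) := by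
    have hbern : (2 : ℝ) ^ q ≤ 1 + q := by
      simpa [one_add_one_eq_two, mul_one] using
        rpow_one_add_le_one_add_mul_self (s := 1) (by norm_num) hq0 hq1
    rw [mul_rpow zero_le_two hT0.le, rpow_sub_one two_ne_zero, ← hT]
    have : 0 ≤ q * θ * T ^ (q - 1) := by positivity
    nlinarith
  simp only [hT, sub_self, zero_mul, add_zero, zero_div, sub_zero] at hpeak htangent
  nlinarith [sub_nonneg.2 ht]

end Profile

theorem integrableOn_exp_of_le {f g : ℝ → ℝ} {s : Set ℝ} (hs : MeasurableSet s)
    (hf : Continuous f) (hg : IntegrableOn (fun t => exp (g t)) s) (hfg : ∀ t ∈ s, f t ≤ g t) :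
    IntegrableOn (fun t => exp (f t)) s :=
  hg.mono' (by fun_prop) <| (ae_restrict_iff' hs).2 <| ae_of_all _ fun t ht => by
    simpa only [norm_eq_abs, abs_exp, exp_le_exp] using hfg t ht

theorem setIntegral_exp_le_of_le {f g : ℝ → ℝ} {s : Set ℝ} (hs : MeasurableSet s)
    (hg : IntegrableOn (fun t => exp (g t)) s) (hfg : ∀ t ∈ s, f t ≤ g t) :
    ∫ t in s, exp (f t) ≤ ∫ t in s, exp (g t) :=
  integral_mono_of_nonneg (ae_of_all _ fun _ => (exp_pos _).le) hg <|
    (ae_restrict_iff' hs).2 <| ae_of_all _ fun t ht => exp_le_exp.2 (hfg t ht)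

section Gaussian

variable {M c a : ℝ} (hc : 0 < c)
include hc

theorem integrable_exp_sub_mul_sq : Integrable (fun t => exp (M - c / 2 * (t - a) ^ 2)) := by
  refine (((integrable_exp_neg_mul_sq (half_pos hc)).comp_sub_right a).const_mul (exp M)).congr
    (ae_of_all _ fun t => ?_)
  simp only [← exp_add]
  ring_nf

theorem setIntegral_exp_sub_mul_sq_le (s : Set ℝ) :
    ∫ t in s, exp (M - c / 2 * (t - a) ^ 2) ≤ exp M * √(2 * π / c) := by
  calc ∫ t in s, exp (M - c / 2 * (t - a) ^ 2)
      ≤ ∫ t, exp (M - c / 2 * (t - a) ^ 2) :=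
        setIntegral_le_integral (integrable_exp_sub_mul_sq hc) (ae_of_all _ fun _ => (exp_pos _).le)
    _ = exp M * ∫ t, exp (-(c / 2) * (t - a) ^ 2) := by
        rw [← integral_const_mul]
        congr 1 with t
        rw [← exp_add]
        ring_nf
    _ = exp M * √(2 * π / c) := by
        rw [integral_sub_right_eq_self (fun t => exp (-(c / 2) * t ^ 2)), integral_gaussian]
        congr 2
        field_simp

end Gaussian

section ExpTail

variable {M b a : ℝ} (hb : 0 < b)
include hb

theorem integrableOn_exp_sub_mul_Ioi : IntegrableOn (fun t => exp (M - b * (t - a))) (Ioi a) := by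
  refine IntegrableOn.congr_fun
    ((integrableOn_exp_mul_Ioi (neg_lt_zero.2 hb) a).const_mul (exp (M + b * a)))
    (fun t _ => ?_) measurableSet_Ioi
  simp only [← exp_add]
  ring_nf

theorem integral_exp_sub_mul_Ioi : ∫ t in Ioi a, exp (M - b * (t - a)) = exp M / b := by
  calc ∫ t in Ioi a, exp (M - b * (t - a)) = ∫ t in Ioi a, exp (M + b * a) * exp (-b * t) := by
        congr 1 with t
        rw [← exp_add]
        ring_nf
    _ = exp M / b := by
        rw [integral_const_mul, integral_exp_mul_Ioi (neg_lt_zero.2 hb), neg_div_neg_eq,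
          mul_div_assoc', ← exp_add]
        ring_nf

end ExpTail

theorem sqrt_two_pi_div_curvature {q θ σ T : ℝ} (hq1 : q < 1) (hσ : 0 < σ) (hT0 : 0 < T)
    (hT : q * θ * T ^ (q - 1) = σ) :
    √(2 * π / (q * (1 - q) * θ * (2 * T) ^ (q - 2)))
      = 2 ^ (1 - q / 2) * √(2 * π / (1 - q)) * √(T * σ) / σ := by
  have h1q : 0 < 1 - q := sub_pos.2 hq1
  have hcurv : q * (1 - q) * θ * (2 * T) ^ (q - 2) = (1 - q) * σ / (2 ^ (2 - q) * T) := by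
    rw [← hT, mul_rpow zero_le_two hT0.le, show q - 2 = (q - 1) - 1 by ring,
      rpow_sub_one hT0.ne', rpow_sub_one two_ne_zero, show (2 : ℝ) - q = -(q - 1) + 1 by ring,
      rpow_add two_pos, rpow_neg zero_le_two, rpow_one]
    have : (0 : ℝ) < 2 ^ (q - 1) := by positivity
    field_simp
  have hsqrt2 : √(2 ^ (2 - q) : ℝ) = 2 ^ (1 - q / 2) := by
    rw [sqrt_eq_rpow, ← rpow_mul zero_le_two]
    ring_nf
  rw [hcurv, show 2 * π / ((1 - q) * σ / (2 ^ (2 - q) * T))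
      = 2 ^ (2 - q) * (2 * π / (1 - q)) * (T * σ) / σ ^ 2 by field_simp,
    sqrt_div' _ (sq_nonneg σ), sqrt_sq hσ.le, sqrt_mul (by positivity), sqrt_mul (by positivity),
    hsqrt2]

section PeakPoint

noncomputable def peakPoint (q θ σ : ℝ) : ℝ := (q * θ / σ) ^ (1 / (1 - q))

variable {q θ σ : ℝ} (hqθ : 0 < q * θ) (hσ : 0 < σ)
include hqθ hσ

theorem peakPoint_pos : 0 < peakPoint q θ σ := by unfold peakPoint; positivity

theorem peakPoint_rpow (x : ℝ) :
    peakPoint q θ σ ^ x = (q * θ) ^ (x / (1 - q)) * σ ^ (-(x / (1 - q))) := by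
  rw [peakPoint, ← rpow_mul (div_pos hqθ hσ).le, div_rpow hqθ.le hσ.le, rpow_neg hσ.le,
    div_eq_mul_inv, one_div_mul_eq_div]

variable (hq1 : q < 1)
include hq1

theorem mul_peakPoint_rpow_sub_one : q * θ * peakPoint q θ σ ^ (q - 1) = σ := by
  have h1q : (1 - q) ≠ 0 := (sub_pos.2 hq1).ne'
  rw [peakPoint_rpow hqθ hσ, show (q - 1) / (1 - q) = -1 by field_simp; ring, neg_neg,
    rpow_neg_one, rpow_one, mul_inv_cancel_left₀ hqθ.ne']

theorem peakValue_eq :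
    θ * peakPoint q θ σ ^ q - σ * peakPoint q θ σ
      = (1 - q) * θ * (q * θ) ^ (q / (1 - q)) * σ ^ (-(q / (1 - q))) := by
  have hσT : σ * peakPoint q θ σ = q * θ * peakPoint q θ σ ^ q := by
    nth_rw 1 [← mul_peakPoint_rpow_sub_one hqθ hσ hq1]
    rw [mul_assoc, ← rpow_add_one (peakPoint_pos hqθ hσ).ne', sub_add_cancel]
  rw [hσT, peakPoint_rpow hqθ hσ]
  ring

theorem sqrt_peakPoint_mul :
    √(peakPoint q θ σ * σ) = (q * θ) ^ (1 / (2 * (1 - q))) * σ ^ (-(q / (2 * (1 - q)))) := by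
  have h1q : (1 - q) ≠ 0 := (sub_pos.2 hq1).ne'
  rw [sqrt_eq_rpow, mul_rpow (peakPoint_pos hqθ hσ).le hσ.le, peakPoint_rpow hqθ hσ,
    mul_assoc, ← rpow_add hσ]
  congr 2 <;> field_simp
  ring

end PeakPoint

theorem integral_exp_mul_rpow_sub_mul_le {q θ σ T : ℝ} (hq0 : 0 < q) (hq1 : q < 1) (hθ : 0 < θ)
    (hT0 : 0 < T) (hT : q * θ * T ^ (q - 1) = σ) :
    ∫ t in Ioi 0, exp (θ * t ^ q - σ * t) ≤ exp (θ * T ^ q - σ * T)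
      * (√(2 * π / (q * (1 - q) * θ * (2 * T) ^ (q - 2))) + 2 / ((1 - q) * σ)) := by
  have hc : 0 < q * (1 - q) * θ * (2 * T) ^ (q - 2) := by
    have := sub_pos.2 hq1; positivity
  have hb : 0 < (1 - q) * σ / 2 := by
    have := sub_pos.2 hq1; rw [← hT]; positivity
  have hφ : Continuous fun t : ℝ => θ * t ^ q - σ * t := by
    have := continuous_rpow_const hq0.le; fun_prop
  have hbody (t : ℝ) (ht : t ∈ Ioc 0 (2 * T)) :=
    mul_rpow_sub_mul_le_sub_sq hq0.le hq1.le hθ.le hT0 hT ht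
  have htail (t : ℝ) (ht : t ∈ Ioi (2 * T)) :=
    mul_rpow_sub_mul_le_sub_mul hq0.le hq1.le hθ.le hT0 hT (mem_Ioi.1 ht).le
  have hgauss := (integrable_exp_sub_mul_sq hc (M := θ * T ^ q - σ * T) (a := T)).integrableOn
    (s := Ioc 0 (2 * T))
  have hexp := integrableOn_exp_sub_mul_Ioi hb (M := θ * T ^ q - σ * T) (a := 2 * T)
  rw [← Ioc_union_Ioi_eq_Ioi (by positivity : (0 : ℝ) ≤ 2 * T),
    setIntegral_union (Ioc_disjoint_Ioi le_rfl) measurableSet_Ioi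
      (integrableOn_exp_of_le measurableSet_Ioc hφ hgauss hbody)
      (integrableOn_exp_of_le measurableSet_Ioi hφ hexp htail),
    mul_add, show 2 / ((1 - q) * σ) = 1 / ((1 - q) * σ / 2) by field_simp, ← div_eq_mul_one_div]
  exact add_le_add
    ((setIntegral_exp_le_of_le measurableSet_Ioc hgauss hbody).trans
      (setIntegral_exp_sub_mul_sq_le hc _))
    ((setIntegral_exp_le_of_le measurableSet_Ioi hexp htail).trans_eq (integral_exp_sub_mul_Ioi hb))

theorem integral_exp_theta_rpow_bound (q θ σ : ℝ)
    (hq0 : 0 < q) (hq1 : q < 1) (hθ : 0 < θ) (hσ : 0 < σ) :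
    ∫ t in Set.Ioi (0 : ℝ), Real.exp (θ * t ^ q - σ * t)
      ≤ (1 / σ) *
        ((2 : ℝ) ^ (1 - q / 2) * (q * θ) ^ (1 / (2 * (1 - q))) *
            Real.sqrt (2 * π / (1 - q)) * σ ^ (-(q / (2 * (1 - q))))
          + 4 / (1 - q)) *
        Real.exp ((1 - q) * θ * (q * θ) ^ (q / (1 - q)) * σ ^ (-(q / (1 - q)))) := by
  have hqθ : 0 < q * θ := mul_pos hq0 hθ
  have hcrit := mul_peakPoint_rpow_sub_one hqθ hσ hq1
  refine (integral_exp_mul_rpow_sub_mul_le hq0 hq1 hθ (peakPoint_pos hqθ hσ) hcrit).trans ?_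
  rw [sqrt_two_pi_div_curvature hq1 hσ (peakPoint_pos hqθ hσ) hcrit, sqrt_peakPoint_mul hqθ hσ hq1,
    peakValue_eq hqθ hσ hq1]
  have htail : 2 / ((1 - q) * σ) ≤ 1 / σ * (4 / (1 - q)) := by
    have := sub_pos.2 hq1
    rw [div_mul_div_comm, one_mul, mul_comm σ]
    gcongr
    norm_num
  linear_combination mul_le_mul_of_nonneg_left htail (exp_pos _).le
end

section
/- Let f : ℝ_{≥0} → ℂ be measurable with ∫_0^∞ e^{-σt}|f(t)| dt < ∞ for every σ > σ₀ ≥ 0, and suppose its Laplace transform F(ζ) = ∫_0^∞ e^{-tζ} f(t) dt vanishes on a nonempty open subset of the half-plane {Re ζ > σ₀}. Then f = 0 almost everywhere on ℝ_{≥0}. -/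
/-!
The Laplace transform `F` is holomorphic on the half-plane `Re ζ > σ₀` (differentiate under the
integral sign), so by the identity theorem it vanishes on the whole half-plane. On the vertical
line `Re ζ = σ` it is the Fourier transform of the integrable function `1_{t > 0} e^{-σt} f(t)`,
which therefore vanishes almost everywhere: pairing it with a compactly supported smooth `φ`
gives `∫ φ g = ∫ (𝓕⁻ φ) (𝓕 g) = 0`, using that the Fourier transform is onto the Schwartz space.
-/

open MeasureTheory Complex Set
open scoped FourierTransform ContDiff Real

section Fourier

variable {V E : Type*} [NormedAddCommGroup V] [InnerProductSpace ℝ V] [FiniteDimensional ℝ V]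
  [MeasurableSpace V] [BorelSpace V] [NormedAddCommGroup E] [NormedSpace ℂ E] [CompleteSpace E]

theorem Real.integral_fourier_smul_eq {φ : V → ℂ} {f : V → E} (hφ : Integrable φ)
    (hf : Integrable f) :
    ∫ ξ, 𝓕 φ ξ • f ξ = ∫ x, φ x • 𝓕 f x := by
  simpa using! VectorFourier.integral_fourierIntegral_smul_eq_flip (L := innerₗ V)
    Real.continuous_fourierChar continuous_inner hφ hf

theorem MeasureTheory.Integrable.ae_eq_zero_of_fourier_eq_zero {f : V → E} (hf : Integrable f)
    (hf0 : 𝓕 f = 0) : f =ᵐ[volume] 0 := by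
  refine ae_eq_zero_of_integral_contDiff_smul_eq_zero hf.locallyIntegrable fun φ hφ hφc ↦ ?_
  let ψ : SchwartzMap V ℂ := (hφc.comp_left (g := ofRealCLM) ofReal_zero).toSchwartzMap
    (ofRealCLM.contDiff.comp hφ)
  let χ : SchwartzMap V ℂ := 𝓕⁻ ψ
  have hχ : 𝓕 ⇑χ = fun x ↦ (φ x : ℂ) := by
    rw [← SchwartzMap.fourier_coe, FourierTransform.fourier_fourierInv_eq]
    rfl
  calc ∫ x, φ x • f x = ∫ x, 𝓕 ⇑χ x • f x := by simp [hχ, Complex.coe_smul]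
    _ = ∫ ξ, χ ξ • 𝓕 f ξ := Real.integral_fourier_smul_eq χ.integrable hf
    _ = 0 := by simp [hf0]

end Fourier

lemma Real.mul_exp_neg_mul_le_inv {δ : ℝ} (hδ : 0 < δ) (t : ℝ) :
    t * Real.exp (-δ * t) ≤ δ⁻¹ :=
  calc t * Real.exp (-δ * t) = δ⁻¹ * (δ * t * Real.exp (-(δ * t))) := by field_simp
    _ ≤ δ⁻¹ * 1 := by
      gcongr
      exact (Real.mul_exp_neg_le_exp_neg_one _).trans (Real.exp_le_one_iff.2 (by norm_num))
    _ = δ⁻¹ := mul_one _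

section Laplace

variable {E : Type*} [NormedAddCommGroup E] [NormedSpace ℂ E]

noncomputable def laplace (f : ℝ → E) (ζ : ℂ) : E :=
  ∫ t in Ioi (0 : ℝ), cexp (-(t : ℂ) * ζ) • f t

lemma norm_cexp_neg_ofReal_mul_smul (t : ℝ) (ζ : ℂ) (x : E) :
    ‖cexp (-(t : ℂ) * ζ) • x‖ = Real.exp (-ζ.re * t) * ‖x‖ := by
  rw [norm_smul, Complex.norm_exp]
  simp [mul_comm]

variable {f : ℝ → E} {σ : ℝ} {ζ : ℂ}

lemma integrable_laplace_integrand (hf : AEStronglyMeasurable f (volume.restrict (Ioi 0)))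
    (hint : Integrable (fun t ↦ Real.exp (-σ * t) * ‖f t‖) (volume.restrict (Ioi 0)))
    (hζ : σ ≤ ζ.re) :
    Integrable (fun t : ℝ ↦ cexp (-(t : ℂ) * ζ) • f t) (volume.restrict (Ioi 0)) := by
  refine hint.mono'
    ((by fun_prop : Continuous fun t : ℝ ↦ cexp (-(t : ℂ) * ζ)).aestronglyMeasurable.smul hf) ?_
  refine (ae_restrict_iff' measurableSet_Ioi).2 (ae_of_all _ fun t (ht : 0 < t) ↦ ?_)
  rw [norm_cexp_neg_ofReal_mul_smul]
  gcongr

theorem hasDerivAt_laplace [CompleteSpace E]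
    (hf : AEStronglyMeasurable f (volume.restrict (Ioi 0)))
    (hint : Integrable (fun t ↦ Real.exp (-σ * t) * ‖f t‖) (volume.restrict (Ioi 0)))
    (hζ : σ < ζ.re) :
    HasDerivAt (laplace f) (laplace (fun t ↦ -(t : ℂ) • f t) ζ) ζ := by
  obtain ⟨δ, hδ, hζδ⟩ : ∃ δ, 0 < δ ∧ σ + 2 * δ = ζ.re :=
    ⟨(ζ.re - σ) / 2, by linarith, by ring⟩
  have hre : ∀ w ∈ Metric.ball ζ δ, σ + δ ≤ w.re := fun w hw ↦ by
    have := (abs_re_le_norm (w - ζ)).trans (mem_ball_iff_norm.1 hw).le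
    rw [sub_re, abs_le] at this
    linarith
  refine (hasDerivAt_integral_of_dominated_loc_of_deriv_le (Metric.ball_mem_nhds ζ hδ)
    (F := fun w t ↦ cexp (-(t : ℂ) * w) • f t) (bound := fun t ↦ δ⁻¹ * (Real.exp (-σ * t) * ‖f t‖))
    (F' := fun w t ↦ cexp (-(t : ℂ) * w) • (-(t : ℂ) • f t))
    (.of_forall fun w ↦ ?_) (integrable_laplace_integrand hf hint hζ.le) ?_ ?_
    (hint.const_mul _) (ae_of_all _ fun t w _ ↦ ?_)).2
  · exact (by fun_prop : Continuous fun t : ℝ ↦ cexp (-(t : ℂ) * w)).aestronglyMeasurable.smul hf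
  · exact (by fun_prop : Continuous fun t : ℝ ↦ cexp (-(t : ℂ) * ζ)).aestronglyMeasurable.smul
      ((by fun_prop : Continuous fun t : ℝ ↦ -(t : ℂ)).aestronglyMeasurable.smul hf)
  · refine (ae_restrict_iff' measurableSet_Ioi).2 (ae_of_all _ fun t (ht : 0 < t) w hw ↦ ?_)
    rw [norm_cexp_neg_ofReal_mul_smul, norm_smul, norm_neg, norm_real, Real.norm_of_nonneg ht.le]
    calc Real.exp (-w.re * t) * (t * ‖f t‖)
        ≤ Real.exp (-(σ + δ) * t) * (t * ‖f t‖) := by gcongr; linarith [hre w hw]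
      _ = (t * Real.exp (-δ * t)) * (Real.exp (-σ * t) * ‖f t‖) := by
        rw [show -(σ + δ) * t = -δ * t + -σ * t by ring, Real.exp_add]
        ring
      _ ≤ δ⁻¹ * (Real.exp (-σ * t) * ‖f t‖) := by
        gcongr
        exact Real.mul_exp_neg_mul_le_inv hδ t
  · have := (((hasDerivAt_id' w).const_mul (-(t : ℂ))).cexp).smul_const (f t)
    rwa [mul_one, ← smul_smul] at this

theorem differentiableOn_laplace [CompleteSpace E] {σ₀ : ℝ}
    (hf : AEStronglyMeasurable f (volume.restrict (Ioi 0)))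
    (hint : ∀ σ, σ₀ < σ →
      Integrable (fun t ↦ Real.exp (-σ * t) * ‖f t‖) (volume.restrict (Ioi 0))) :
    DifferentiableOn ℂ (laplace f) {ζ | σ₀ < ζ.re} := fun ζ hζ ↦ by
  obtain ⟨σ, hσ₀, hσ⟩ : ∃ σ, σ₀ < σ ∧ σ < ζ.re := exists_between hζ
  exact (hasDerivAt_laplace hf (hint σ hσ₀) hσ).differentiableAt.differentiableWithinAt

theorem laplace_eqOn_zero_of_eqOn_zero [CompleteSpace E] {σ₀ : ℝ}
    (hf : AEStronglyMeasurable f (volume.restrict (Ioi 0)))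
    (hint : ∀ σ, σ₀ < σ →
      Integrable (fun t ↦ Real.exp (-σ * t) * ‖f t‖) (volume.restrict (Ioi 0)))
    {U : Set ℂ} (hU : IsOpen U) (hUne : U.Nonempty) (hUsub : U ⊆ {ζ | σ₀ < ζ.re})
    (hU0 : EqOn (laplace f) 0 U) :
    EqOn (laplace f) 0 {ζ | σ₀ < ζ.re} := by
  obtain ⟨z, hz⟩ := hUne
  exact ((differentiableOn_laplace hf hint).analyticOnNhd
    (isOpen_lt continuous_const continuous_re)).eqOn_zero_of_preconnected_of_eventuallyEq_zero
    (convex_halfSpace_re_gt σ₀).isPreconnected (hUsub hz)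
    (Filter.eventuallyEq_of_mem (hU.mem_nhds hz) hU0)

lemma fourier_indicator_exp_smul_eq_laplace (f : ℝ → E) (σ w : ℝ) :
    𝓕 ((Ioi (0 : ℝ)).indicator fun t ↦ Real.exp (-σ * t) • f t) w =
      laplace f (σ + (2 * π * w : ℝ) * I) := by
  rw [Real.fourier_real_eq, laplace, ← integral_indicator measurableSet_Ioi]
  congr 1 with t
  by_cases ht : t ∈ Ioi 0
  · rw [indicator_of_mem ht, indicator_of_mem ht, Circle.smul_def, Real.fourierChar_apply,
      ← Complex.coe_smul, smul_smul, ofReal_exp, ← Complex.exp_add]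
    congr 2
    push_cast
    ring
  · rw [indicator_of_notMem ht, indicator_of_notMem ht, smul_zero]

theorem ae_eq_zero_of_laplace_eq_zero_on_vertical_line [CompleteSpace E]
    (hf : AEStronglyMeasurable f (volume.restrict (Ioi 0)))
    (hint : Integrable (fun t ↦ Real.exp (-σ * t) * ‖f t‖) (volume.restrict (Ioi 0)))
    (h0 : ∀ w : ℝ, laplace f (σ + w * I) = 0) :
    ∀ᵐ t ∂(volume.restrict (Ioi 0)), f t = 0 := by
  set g := (Ioi (0 : ℝ)).indicator fun t ↦ Real.exp (-σ * t) • f t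
  have hg : Integrable g := by
    rw [integrable_indicator_iff measurableSet_Ioi]
    refine hint.mono'
      ((by fun_prop : Continuous fun t ↦ Real.exp (-σ * t)).aestronglyMeasurable.smul hf)
      (ae_of_all _ fun t ↦ ?_)
    rw [norm_smul, Real.norm_of_nonneg (Real.exp_pos _).le]
  have hg0 : g =ᵐ[volume] 0 := hg.ae_eq_zero_of_fourier_eq_zero <| funext fun w ↦ by
    rw [fourier_indicator_exp_smul_eq_laplace]
    exact h0 _
  filter_upwards [ae_restrict_of_ae hg0, ae_restrict_mem measurableSet_Ioi] with t hgt ht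
  simpa [g, indicator_of_mem ht, (Real.exp_pos _).ne'] using hgt

end Laplace

theorem laplace_injectivity_general (σ₀ : ℝ) (f : ℝ → ℂ)
    (hmeas : Measurable f)
    (hint : ∀ σ : ℝ, σ₀ < σ →
      Integrable (fun t : ℝ => Real.exp (-σ * t) * ‖f t‖) (volume.restrict (Set.Ioi 0)))
    (U : Set ℂ) (hUopen : IsOpen U) (hUne : U.Nonempty)
    (hUsub : U ⊆ {ζ : ℂ | σ₀ < ζ.re})
    (hvanish : ∀ ζ ∈ U, (∫ t in Set.Ioi (0 : ℝ), Complex.exp (-(t : ℂ) * ζ) * f t) = 0) :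
    ∀ᵐ t ∂(volume.restrict (Set.Ici (0 : ℝ))), f t = 0 := by
  have hF0 : EqOn (laplace f) 0 {ζ | σ₀ < ζ.re} :=
    laplace_eqOn_zero_of_eqOn_zero hmeas.aestronglyMeasurable hint hUopen hUne hUsub hvanish
  rw [Measure.restrict_congr_set Ioi_ae_eq_Ici.symm]
  exact ae_eq_zero_of_laplace_eq_zero_on_vertical_line hmeas.aestronglyMeasurable
    (hint _ (lt_add_one σ₀)) fun w ↦ hF0 (by simp)

theorem laplace_injectivity (σ₀ : ℝ) (hσ₀ : 0 ≤ σ₀) (f : ℝ → ℂ)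
    (hmeas : Measurable f)
    (hint : ∀ σ : ℝ, σ₀ < σ →
      Integrable (fun t : ℝ => Real.exp (-σ * t) * ‖f t‖) (volume.restrict (Set.Ioi 0)))
    (U : Set ℂ) (hUopen : IsOpen U) (hUne : U.Nonempty)
    (hUsub : U ⊆ {ζ : ℂ | σ₀ < ζ.re})
    (hvanish : ∀ ζ ∈ U, (∫ t in Set.Ioi (0 : ℝ), Complex.exp (-(t : ℂ) * ζ) * f t) = 0) :
    ∀ᵐ t ∂(volume.restrict (Set.Ici (0 : ℝ))), f t = 0 :=
  laplace_injectivity_general σ₀ f hmeas hint U hUopen hUne hUsub hvanish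
end
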